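/- Every Ordered Consistent Set is a Preclusive Consistent Set: let D be a strongly positive, Hermitian, biadditive, normalized decoherence functional on finite Ω, and let C be a consistent partition of Ω such that every cell A ∈ C is ordered consistent (for every consistent history H, A ⊆ H implies μ(A) ≤ μ(H), and H ⊆ A implies μ(H) ≤ μ(A)). Then C is preclusive: no cell A ∈ C with μ(A) ≠ 0 is contained in a set Z with μ(Z) = 0. -/

import Mathlib

open ComplexOrder

/-- Strong positivity of a decoherence functional. -/
def StronglyPositive {Ω : Type*} (D : Set Ω → Set Ω → ℂ) : Prop :=
  ∀ (n : ℕ) (A : Fin n → Set Ω),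
    Matrix.PosSemidef (Matrix.of fun i j => D (A i) (A j))

/-- The quantum measure associated with a decoherence functional. -/
def qmeasure {Ω : Type*} (D : Set Ω → Set Ω → ℂ) (A : Set Ω) : ℝ := (D A A).re

/-- A history is consistent if it decoheres with its negation. -/
def ConsistentHistory {Ω : Type*} (D : Set Ω → Set Ω → ℂ) (H : Set Ω) : Prop :=
  D H Hᶜ = 0

/-!
A null set `Z` (`μ(Z) = 0`) has `D(Z, Z) = 0`, and in a positive semidefinite matrix a vanishing
diagonal entry forces its whole row to vanish; hence `D(Z, Zᶜ) = 0`, i.e. `Z` is consistent.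
Ordered consistency of the cell `A ⊆ Z` then gives `0 ≤ μ(A) ≤ μ(Z) = 0`.
-/

namespace Matrix.PosSemidef

variable {n 𝕜 : Type*} [Fintype n] [RCLike 𝕜]

theorem apply_eq_zero_of_diag_eq_zero {A : Matrix n n 𝕜} (hA : A.PosSemidef) {i : n}
    (hi : A i i = 0) (j : n) : A i j = 0 := by
  classical
  have hcol : A *ᵥ Pi.single i 1 = 0 :=
    (hA.dotProduct_mulVec_zero_iff _).mp (by simp [hi])
  have hji : A j i = 0 := by simpa using congrFun hcol j
  rw [← hA.isHermitian.apply i j, hji, star_zero]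

end Matrix.PosSemidef

namespace StronglyPositive

variable {Ω : Type*} {D : Set Ω → Set Ω → ℂ}

theorem apply_self_nonneg (hD : StronglyPositive D) (A : Set Ω) : 0 ≤ D A A :=
  (hD 1 fun _ => A).diag_nonneg (i := 0)

theorem qmeasure_nonneg (hD : StronglyPositive D) (A : Set Ω) : 0 ≤ qmeasure D A :=
  (Complex.nonneg_iff.mp (hD.apply_self_nonneg A)).1

theorem apply_self_eq_zero_of_qmeasure_eq_zero (hD : StronglyPositive D) {A : Set Ω}
    (hA : qmeasure D A = 0) : D A A = 0 :=
  Complex.ext hA (Complex.nonneg_iff.mp (hD.apply_self_nonneg A)).2.symm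

theorem apply_eq_zero_of_apply_self_eq_zero (hD : StronglyPositive D) {A : Set Ω}
    (hA : D A A = 0) (B : Set Ω) : D A B = 0 :=
  (hD 2 ![A, B]).apply_eq_zero_of_diag_eq_zero (i := 0) hA 1

theorem consistentHistory_of_qmeasure_eq_zero (hD : StronglyPositive D) {Z : Set Ω}
    (hZ : qmeasure D Z = 0) : ConsistentHistory D Z :=
  hD.apply_eq_zero_of_apply_self_eq_zero (hD.apply_self_eq_zero_of_qmeasure_eq_zero hZ) Zᶜ

end StronglyPositive

theorem ordered_consistent_set_is_preclusive_general {Ω : Type*}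
    (D : Set Ω → Set Ω → ℂ)
    (hSP : StronglyPositive D)
    (n : ℕ) (C : Fin n → Set Ω)
    (hOrdered : ∀ i, ∀ H : Set Ω, ConsistentHistory D H →
      ((C i ⊆ H → qmeasure D (C i) ≤ qmeasure D H) ∧
       (H ⊆ C i → qmeasure D H ≤ qmeasure D (C i)))) :
    ∀ i, qmeasure D (C i) ≠ 0 →
      ¬ ∃ Z : Set Ω, qmeasure D Z = 0 ∧ C i ⊆ Z := by
  rintro i hCi ⟨Z, hZ, hCiZ⟩
  have hle : qmeasure D (C i) ≤ qmeasure D Z :=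
    (hOrdered i Z (hSP.consistentHistory_of_qmeasure_eq_zero hZ)).1 hCiZ
  exact hCi (le_antisymm (hZ ▸ hle) (hSP.qmeasure_nonneg (C i)))

theorem ordered_consistent_set_is_preclusive {Ω : Type*} [Fintype Ω]
    (D : Set Ω → Set Ω → ℂ)
    (hHerm : ∀ A B : Set Ω, D A B = star (D B A))
    (hAdd : ∀ A B C : Set Ω, Disjoint A B → D (A ∪ B) C = D A C + D B C)
    (hSP : StronglyPositive D)
    (hNorm : D Set.univ Set.univ = 1)
    (n : ℕ) (C : Fin n → Set Ω)
    (hDisj : ∀ i j, i ≠ j → Disjoint (C i) (C j))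
    (hCover : (⋃ i, C i) = Set.univ)
    (hCons : ∀ i j, i ≠ j → D (C i) (C j) = 0)
    (hOrdered : ∀ i, ∀ H : Set Ω, ConsistentHistory D H →
      ((C i ⊆ H → qmeasure D (C i) ≤ qmeasure D H) ∧
       (H ⊆ C i → qmeasure D H ≤ qmeasure D (C i)))) :
    ∀ i, qmeasure D (C i) ≠ 0 →
      ¬ ∃ Z : Set Ω, qmeasure D Z = 0 ∧ C i ⊆ Z :=
  ordered_consistent_set_is_preclusive_general D hSP n C hOrdered
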